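/- Let ρ be a density matrix on ℂ^{n₁} ⊗ ℂ^{n₂}. Then ρ is separable (i.e. ρ lies in the convex hull of the pure product states (x⊗y)(x⊗y)† with x, y unit vectors) if and only if Re Tr(Wρ) ≥ 0 for every Hermitian matrix W indexed by (Fin n₁ × Fin n₂) satisfying Re((x⊗y)†W(x⊗y)) ≥ 0 for all unit vectors x ∈ ℂ^{n₁}, y ∈ ℂ^{n₂}. -/

import Mathlib

open Matrix ComplexOrder

/-- The tensor product of two vectors: `(x ⊗ y)(i,j) = xᵢ · yⱼ`. -/
def tens {n₁ n₂ : ℕ} (x : Fin n₁ → ℂ) (y : Fin n₂ → ℂ) : Fin n₁ × Fin n₂ → ℂ :=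
  fun p => x p.1 * y p.2

/-- The rank-one matrix `v v†`. -/
def outer {ι : Type*} (v : ι → ℂ) : Matrix ι ι ℂ :=
  Matrix.of fun s t => v s * (starRingEnd ℂ) (v t)

/-- A unit vector: `∑ |xᵢ|² = 1`. -/
def IsUnitVec {n : ℕ} (x : Fin n → ℂ) : Prop :=
  ∑ i, Complex.normSq (x i) = 1

/-- The set of pure product states `(x⊗y)(x⊗y)†` with `x, y` unit vectors. -/
def prodStates (n₁ n₂ : ℕ) : Set (Matrix (Fin n₁ × Fin n₂) (Fin n₁ × Fin n₂) ℂ) :=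
  {M | ∃ (x : Fin n₁ → ℂ) (y : Fin n₂ → ℂ), IsUnitVec x ∧ IsUnitVec y ∧ M = outer (tens x y)}

/-- The convex hull of a compact set in a finite-dimensional normed space is compact. -/
lemma myIsCompact_convexHull {E : Type*} [NormedAddCommGroup E] [NormedSpace ℝ E]
    [FiniteDimensional ℝ E] {s : Set E} (hs : IsCompact s) :
    IsCompact (convexHull ℝ s) := by
  rcases s.eq_empty_or_nonempty with rfl | ⟨x0, hx0⟩
  · simp
  set d := Module.finrank ℝ E + 1 with hd
  have heq : convexHull ℝ s =
      (fun p : (Fin d → ℝ) × (Fin d → E) => ∑ i, p.1 i • p.2 i) ''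
        ((stdSimplex ℝ (Fin d)) ×ˢ (Set.univ.pi fun _ => s)) := by
    apply Set.Subset.antisymm
    · intro x hx
      obtain ⟨ι, hfin, z, w, hzs, hai, hw0, hw1, hwx⟩ :=
        eq_pos_convex_span_of_mem_convexHull hx
      letI := hfin
      have hcard : Fintype.card ι ≤ d := by
        refine hai.card_le_finrank_succ.trans ?_
        exact Nat.add_le_add_right (Submodule.finrank_le _) 1
      obtain ⟨e⟩ : Nonempty (ι ↪ Fin d) := by
        apply Function.Embedding.nonempty_of_card_le
        simpa using hcard
      classical
      set w' : Fin d → ℝ := Function.extend e w 0 with hw'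
      set z' : Fin d → E := Function.extend e z (fun _ => x0) with hz'
      have hwe : ∀ i, w' (e i) = w i := fun i => e.injective.extend_apply _ _ _
      have hze : ∀ i, z' (e i) = z i := fun i => e.injective.extend_apply _ _ _
      have hwn : ∀ j, j ∉ Set.range e → w' j = 0 := by
        intro j hj
        rw [hw', Function.extend_apply' _ _ _ (by simpa using hj)]
        rfl
      refine ⟨⟨w', z'⟩, ⟨⟨fun j => ?_, ?_⟩, fun j _ => ?_⟩, ?_⟩
      · show 0 ≤ w' j
        by_cases hj : j ∈ Set.range e
        · obtain ⟨i, rfl⟩ := hj; rw [hwe]; exact (hw0 i).le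
        · rw [hwn j hj]
      · show ∑ j, w' j = 1
        rw [← hw1]
        rw [← Finset.sum_subset (Finset.subset_univ (Finset.univ.map e))]
        · rw [Finset.sum_map]
          exact Finset.sum_congr rfl fun i _ => hwe i
        · intro j _ hj
          apply hwn
          simpa using hj
      · show z' j ∈ s
        by_cases hj : j ∈ Set.range e
        · obtain ⟨i, rfl⟩ := hj; rw [hze]; exact hzs ⟨i, rfl⟩
        · rw [hz', Function.extend_apply' _ _ _ (by simpa using hj)]; exact hx0
      · show ∑ j, w' j • z' j = x
        rw [← hwx]
        rw [← Finset.sum_subset (Finset.subset_univ (Finset.univ.map e))]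
        · rw [Finset.sum_map]
          exact Finset.sum_congr rfl fun i _ => by rw [hwe, hze]
        · intro j _ hj
          rw [hwn j (by simpa using hj), zero_smul]
    · rintro x ⟨⟨w, v⟩, ⟨hw, hv⟩, rfl⟩
      exact (convex_convexHull ℝ s).sum_mem (fun i _ => hw.1 i) hw.2
        (fun i _ => subset_convexHull ℝ s (hv i trivial))
  rw [heq]
  apply ((isCompact_stdSimplex _ _).prod (isCompact_univ_pi fun _ => hs)).image
  exact continuous_finset_sum _ fun i _ =>
    ((continuous_apply i).comp continuous_fst).smul ((continuous_apply i).comp continuous_snd)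

/-- Any real-linear functional on complex matrices is `A ↦ Re Tr (B A)` for some `B`. -/
lemma exists_repr {ι : Type*} [Fintype ι] [DecidableEq ι] (f : Matrix ι ι ℂ →ₗ[ℝ] ℝ) :
    ∃ B : Matrix ι ι ℂ, ∀ A, ((B * A).trace).re = f A := by
  classical
  refine ⟨Matrix.of fun s t => (f (Matrix.single t s 1) : ℂ) -
    Complex.I * (f ((Complex.I : ℂ) • Matrix.single t s 1) : ℂ), fun A => ?_⟩
  have hA : A = ∑ t, ∑ s, ((A t s).re • Matrix.single t s 1 +
      (A t s).im • ((Complex.I : ℂ) • Matrix.single t s 1)) := by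
    ext p q
    simp only [Matrix.sum_apply, Matrix.add_apply, Matrix.smul_apply, Matrix.single,
      Matrix.of_apply, smul_ite, smul_zero, smul_eq_mul]
    rw [Finset.sum_eq_single p, Finset.sum_eq_single q]
    · simp only [eq_self_iff_true, and_self, if_true, Complex.real_smul, mul_one]
      conv_lhs => rw [← Complex.re_add_im (A p q)]
    · intro b _ hb; simp [hb]
    · simp
    · intro b _ hb
      apply Finset.sum_eq_zero
      intro c _
      simp [hb]
    · simp
  calc ((Matrix.of (fun s t => (f (Matrix.single t s 1) : ℂ) -
        Complex.I * (f ((Complex.I : ℂ) • Matrix.single t s 1) : ℂ)) * A).trace).re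
      = ∑ s, ∑ t, ((((f (Matrix.single t s 1) : ℂ) -
          Complex.I * (f ((Complex.I : ℂ) • Matrix.single t s 1) : ℂ)) * A t s)).re := by
        simp [Matrix.trace, Matrix.diag, Matrix.mul_apply, Complex.re_sum]
    _ = ∑ t, ∑ s, ((A t s).re * f (Matrix.single t s 1) +
          (A t s).im * f ((Complex.I : ℂ) • Matrix.single t s 1)) := by
        rw [Finset.sum_comm]
        refine Finset.sum_congr rfl fun t _ => Finset.sum_congr rfl fun s _ => ?_
        simp [Complex.sub_re, Complex.mul_re, Complex.mul_im, Complex.ofReal_re,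
          Complex.ofReal_im]
        ring
    _ = f A := by
        conv_rhs => rw [hA]
        rw [map_sum]
        refine Finset.sum_congr rfl fun t _ => ?_
        rw [map_sum]
        refine Finset.sum_congr rfl fun s _ => ?_
        rw [map_add, f.map_smul, f.map_smul, smul_eq_mul, smul_eq_mul]

lemma trace_mul_outer {ι : Type*} [Fintype ι] (W : Matrix ι ι ℂ) (v : ι → ℂ) :
    (W * outer v).trace = star v ⬝ᵥ W.mulVec v := by
  simp only [Matrix.trace, Matrix.diag, Matrix.mul_apply, outer, Matrix.of_apply,
    dotProduct, Matrix.mulVec, Pi.star_apply, Finset.mul_sum]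
  refine Finset.sum_congr rfl fun s _ => Finset.sum_congr rfl fun t _ => ?_
  simp [RCLike.star_def]
  ring

lemma outer_conjT {ι : Type*} (v : ι → ℂ) : (outer v)ᴴ = outer v := by
  ext s t
  simp [outer, Matrix.conjTranspose_apply, mul_comm]

lemma trace_outer_tens {n₁ n₂ : ℕ} {x : Fin n₁ → ℂ} {y : Fin n₂ → ℂ}
    (hx : IsUnitVec x) (hy : IsUnitVec y) : (outer (tens x y)).trace = 1 := by
  have : (outer (tens x y)).trace =
      ((∑ i, Complex.normSq (x i) : ℝ) : ℂ) * ((∑ j, Complex.normSq (y j) : ℝ) : ℂ) := by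
    simp only [Matrix.trace, Matrix.diag, outer, Matrix.of_apply, Complex.mul_conj]
    push_cast
    rw [Fintype.sum_prod_type, Finset.sum_mul_sum]
    refine Finset.sum_congr rfl fun i _ => Finset.sum_congr rfl fun j _ => ?_
    simp [tens, Complex.normSq_mul]
  rw [this, hx, hy]
  norm_num

attribute [local instance] Matrix.normedAddCommGroup Matrix.normedSpace

lemma isCompact_unitVecs (n : ℕ) : IsCompact {x : Fin n → ℂ | IsUnitVec x} := by
  have hcont : Continuous fun x : Fin n → ℂ => ∑ i, Complex.normSq (x i) :=
    continuous_finset_sum _ fun i _ => Complex.continuous_normSq.comp (continuous_apply i)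
  have hclosed : IsClosed {x : Fin n → ℂ | IsUnitVec x} :=
    isClosed_eq hcont continuous_const
  refine (isCompact_closedBall (0 : Fin n → ℂ) 1).of_isClosed_subset hclosed ?_
  intro x hx
  rw [Metric.mem_closedBall, dist_zero_right]
  rw [pi_norm_le_iff_of_nonneg zero_le_one]
  intro i
  have h1 : Complex.normSq (x i) ≤ 1 := by
    rw [← hx]
    exact Finset.single_le_sum (fun j _ => Complex.normSq_nonneg _) (Finset.mem_univ i)
  have h2 := Complex.sq_norm (x i)
  nlinarith [norm_nonneg (x i)]

lemma isCompact_prodStates (n₁ n₂ : ℕ) : IsCompact (prodStates n₁ n₂) := by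
  have heq : prodStates n₁ n₂ =
      (fun p : (Fin n₁ → ℂ) × (Fin n₂ → ℂ) => outer (tens p.1 p.2)) ''
        ({x | IsUnitVec x} ×ˢ {y | IsUnitVec y}) := by
    ext M
    constructor
    · rintro ⟨x, y, hx, hy, rfl⟩; exact ⟨(x, y), ⟨hx, hy⟩, rfl⟩
    · rintro ⟨⟨x, y⟩, ⟨hx, hy⟩, rfl⟩; exact ⟨x, y, hx, hy, rfl⟩
  rw [heq]
  apply ((isCompact_unitVecs n₁).prod (isCompact_unitVecs n₂)).image
  apply continuous_matrix
  intro s t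
  simp only [outer, tens, Matrix.of_apply]
  exact (((continuous_apply s.1).comp continuous_fst).mul
      ((continuous_apply s.2).comp continuous_snd)).mul
    (Complex.continuous_conj.comp (((continuous_apply t.1).comp continuous_fst).mul
      ((continuous_apply t.2).comp continuous_snd)))

theorem statement8 (n₁ n₂ : ℕ)
    (ρ : Matrix (Fin n₁ × Fin n₂) (Fin n₁ × Fin n₂) ℂ)
    (hρ : ρ.PosSemidef) (htr : ρ.trace = 1) :
    ρ ∈ convexHull ℝ (prodStates n₁ n₂) ↔
      ∀ W : Matrix (Fin n₁ × Fin n₂) (Fin n₁ × Fin n₂) ℂ, W.IsHermitian →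
        (∀ (x : Fin n₁ → ℂ) (y : Fin n₂ → ℂ), IsUnitVec x → IsUnitVec y →
          0 ≤ (star (tens x y) ⬝ᵥ W.mulVec (tens x y)).re) →
        0 ≤ ((W * ρ).trace).re := by
  classical
  constructor
  · intro hmem W _ hpos
    have hsub : prodStates n₁ n₂ ⊆ {A | 0 ≤ ((W * A).trace).re} := by
      rintro M ⟨x, y, hx, hy, rfl⟩
      show 0 ≤ ((W * outer (tens x y)).trace).re
      rw [trace_mul_outer]
      exact hpos x y hx hy
    have hconv : Convex ℝ {A : Matrix (Fin n₁ × Fin n₂) (Fin n₁ × Fin n₂) ℂ |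
        0 ≤ ((W * A).trace).re} := by
      intro A hA B hB a b ha hb hab
      simp only [Set.mem_setOf_eq] at hA hB ⊢
      have hexp : (W * (a • A + b • B)).trace = a • (W * A).trace + b • (W * B).trace := by
        rw [Matrix.mul_add, Matrix.mul_smul, Matrix.mul_smul, Matrix.trace_add,
          Matrix.trace_smul, Matrix.trace_smul]
      rw [hexp, Complex.add_re, Complex.smul_re, Complex.smul_re]
      exact add_nonneg (mul_nonneg ha hA) (mul_nonneg hb hB)
    exact convexHull_min hsub hconv hmem
  · intro hyp
    by_contra hmem
    have hKc : IsCompact (convexHull ℝ (prodStates n₁ n₂)) :=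
      myIsCompact_convexHull (isCompact_prodStates n₁ n₂)
    haveI : LocallyConvexSpace ℝ (Matrix (Fin n₁ × Fin n₂) (Fin n₁ × Fin n₂) ℂ) :=
      NormedSpace.toLocallyConvexSpace
    obtain ⟨f, u, hfρ, hfK⟩ :=
      geometric_hahn_banach_point_closed (convex_convexHull ℝ _) hKc.isClosed hmem
    obtain ⟨B, hB⟩ := exists_repr (f.toLinearMap)
    set W0 : Matrix (Fin n₁ × Fin n₂) (Fin n₁ × Fin n₂) ℂ := B - (u : ℂ) • 1 with hW0
    have hre0 : ∀ A : Matrix (Fin n₁ × Fin n₂) (Fin n₁ × Fin n₂) ℂ,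
        ((W0 * A).trace).re = f A - u * (A.trace).re := by
      intro A
      rw [hW0, Matrix.sub_mul, Matrix.trace_sub, Complex.sub_re, hB]
      congr 1
      rw [Matrix.smul_mul, Matrix.one_mul, Matrix.trace_smul, smul_eq_mul,
        Complex.re_ofReal_mul]
    set W : Matrix (Fin n₁ × Fin n₂) (Fin n₁ × Fin n₂) ℂ := W0 + W0ᴴ with hWdef
    have hHerm : W.IsHermitian := by
      show Wᴴ = W
      rw [hWdef, Matrix.conjTranspose_add, Matrix.conjTranspose_conjTranspose, add_comm]
    have hkey : ∀ A : Matrix (Fin n₁ × Fin n₂) (Fin n₁ × Fin n₂) ℂ, Aᴴ = A →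
        ((W * A).trace).re = 2 * (f A - u * (A.trace).re) := by
      intro A hA
      have h2 : ((W0ᴴ * A).trace).re = ((W0 * A).trace).re := by
        have hc : (W0ᴴ * A).trace = (starRingEnd ℂ) ((W0 * A).trace) := by
          conv_lhs => rw [← hA]
          rw [← Matrix.conjTranspose_mul, Matrix.trace_conjTranspose, Matrix.trace_mul_comm]
          rfl
        rw [hc, Complex.conj_re]
      rw [hWdef, Matrix.add_mul, Matrix.trace_add, Complex.add_re, h2, hre0]
      ring
    have h1 : ∀ (x : Fin n₁ → ℂ) (y : Fin n₂ → ℂ), IsUnitVec x → IsUnitVec y →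
        0 ≤ (star (tens x y) ⬝ᵥ W.mulVec (tens x y)).re := by
      intro x y hx hy
      have hmemS : outer (tens x y) ∈ prodStates n₁ n₂ := ⟨x, y, hx, hy, rfl⟩
      have hfσ := hfK _ (subset_convexHull ℝ _ hmemS)
      rw [← trace_mul_outer, hkey _ (outer_conjT _), trace_outer_tens hx hy]
      simp only [Complex.one_re]
      linarith
    have h2 := hyp W hHerm h1
    rw [hkey ρ hρ.1, htr] at h2
    simp only [Complex.one_re] at h2
    linarith
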